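/- Let I : ℝ^d → ℝ be twice continuously differentiable with ‖∇²I(z)‖ ≤ M for all z ∈ ℝ^d, and let δ, L > 0. Let y ∈ ℝ^d with δ ≤ |∇I(y)| ≤ L. Then the function φ(λ) = I(y + λ∇I(y)) is strictly monotone increasing on the open interval (−δ²/(ML²), δ²/(ML²)); in particular, for any c ∈ ℝ there is at most one λ in this interval satisfying I(y + λ∇I(y)) = c. (Local uniqueness of the projection parameter λ in the projection step.) -/

import Mathlib

/-!
Along the line `t ↦ y + t • g` with `g = ∇I(y)`, the derivative of `I` is `⟪∇I(y + t • g), g⟫`.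
Since `∇I` is `M`-Lipschitz (mean value inequality for the Hessian bound), this inner product is
at least `(1 - M |t|) ‖g‖²`, which is positive as soon as `M |t| < 1`. The interval of the
theorem has radius `r = δ² / (M L²)` with `M r ≤ δ² / L² ≤ 1`.
-/

open scoped RealInnerProductSpace

section

open InnerProductSpace

variable {E : Type*} [NormedAddCommGroup E] [InnerProductSpace ℝ E] [CompleteSpace E]
  {f : E → ℝ}

theorem ContDiff.gradient {n m : WithTop ℕ∞} (hf : ContDiff ℝ n f) (hmn : m + 1 ≤ n) :
    ContDiff ℝ m (gradient f) :=
  (toDual ℝ E).symm.contDiff.comp (hf.fderiv_right hmn)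

theorem norm_gradient_sub_le_of_norm_fderiv_gradient_le {M : ℝ}
    (hf : Differentiable ℝ (gradient f))
    (hHess : ∀ z, ‖fderiv ℝ (gradient f) z‖ ≤ M) (x y : E) :
    ‖gradient f x - gradient f y‖ ≤ M * ‖x - y‖ :=
  convex_univ.norm_image_sub_le_of_norm_fderiv_le
    (fun z _ => hf z) (fun z _ => hHess z) trivial trivial

theorem hasDerivAt_comp_add_smul {x v : E} {t : ℝ} (hf : DifferentiableAt ℝ f (x + t • v)) :
    HasDerivAt (fun s : ℝ => f (x + s • v)) ⟪gradient f (x + t • v), v⟫ t := by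
  have hline : HasDerivAt (fun s : ℝ => x + s • v) v t := by
    simpa using ((hasDerivAt_id t).smul_const v).const_add x
  rw [inner_gradient_left]
  exact hf.hasFDerivAt.comp_hasDerivAt t hline

theorem inner_gradient_add_smul_gradient_pos {M r t : ℝ} {y : E}
    (hlip : ∀ x, ‖gradient f x - gradient f y‖ ≤ M * ‖x - y‖) (hy : gradient f y ≠ 0)
    (hMr : M * r ≤ 1) (ht : |t| < r) :
    0 < ⟪gradient f (y + t • gradient f y), gradient f y⟫ := by
  set g := gradient f y
  have hMt : M * |t| < 1 := by
    rcases le_or_gt M 0 with hM | hM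
    · nlinarith [abs_nonneg t]
    · nlinarith
  have hdist : ‖gradient f (y + t • g) - g‖ ≤ M * |t| * ‖g‖ := by
    simpa [norm_smul, mul_assoc] using hlip (y + t • g)
  calc 0 < (1 - M * |t|) * ‖g‖ ^ 2 := by have := norm_pos_iff.mpr hy; positivity
    _ = ⟪g, g⟫ - M * |t| * ‖g‖ * ‖g‖ := by rw [real_inner_self_eq_norm_sq]; ring
    _ ≤ ⟪g, g⟫ + ⟪gradient f (y + t • g) - g, g⟫ := by
      have := (abs_le.mp ((abs_real_inner_le_norm _ _).trans
        (mul_le_mul_of_nonneg_right hdist (norm_nonneg g)))).1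
      linarith
    _ = ⟪gradient f (y + t • g), g⟫ := by rw [inner_sub_left]; ring

theorem strictMonoOn_comp_add_smul_gradient {M r : ℝ} {y : E} (hf : Differentiable ℝ f)
    (hlip : ∀ x, ‖gradient f x - gradient f y‖ ≤ M * ‖x - y‖) (hy : gradient f y ≠ 0)
    (hMr : M * r ≤ 1) :
    StrictMonoOn (fun t : ℝ => f (y + t • gradient f y)) (Set.Ioo (-r) r) := by
  have hderiv (t : ℝ) := hasDerivAt_comp_add_smul (v := gradient f y) (hf (y + t • gradient f y))
  refine strictMonoOn_of_deriv_pos (convex_Ioo _ _)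
    (fun t _ => (hderiv t).continuousAt.continuousWithinAt) fun t ht => ?_
  rw [interior_Ioo] at ht
  rw [(hderiv t).deriv]
  exact inner_gradient_add_smul_gradient_pos hlip hy hMr (abs_lt.mpr ht)

end

theorem projection_step_unique_general (d : ℕ) (I : EuclideanSpace ℝ (Fin d) → ℝ)
    (hI : ContDiff ℝ 2 I) (M δ L : ℝ) (hδ : 0 < δ)
    (hHess : ∀ z : EuclideanSpace ℝ (Fin d), ‖fderiv ℝ (fun w => gradient I w) z‖ ≤ M)
    (y : EuclideanSpace ℝ (Fin d))
    (hylb : δ ≤ ‖gradient I y‖) (hyub : ‖gradient I y‖ ≤ L) :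
    StrictMonoOn (fun lam : ℝ => I (y + lam • gradient I y))
      (Set.Ioo (-(δ ^ 2 / (M * L ^ 2))) (δ ^ 2 / (M * L ^ 2))) ∧
    ∀ c : ℝ, ∀ lam₁ ∈ Set.Ioo (-(δ ^ 2 / (M * L ^ 2))) (δ ^ 2 / (M * L ^ 2)),
      ∀ lam₂ ∈ Set.Ioo (-(δ ^ 2 / (M * L ^ 2))) (δ ^ 2 / (M * L ^ 2)),
      I (y + lam₁ • gradient I y) = c → I (y + lam₂ • gradient I y) = c →
      lam₁ = lam₂ := by
  have hy : gradient I y ≠ 0 := norm_pos_iff.mp (hδ.trans_le hylb)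
  have hMr : M * (δ ^ 2 / (M * L ^ 2)) ≤ 1 := by
    rcases eq_or_ne M 0 with rfl | hM
    · simp
    · rw [← mul_div_assoc, mul_div_mul_left _ _ hM]
      exact div_le_one_of_le₀ (pow_le_pow_left₀ hδ.le (hylb.trans hyub) 2) (sq_nonneg L)
  have hmono := strictMonoOn_comp_add_smul_gradient (hI.differentiable (by norm_num))
    (norm_gradient_sub_le_of_norm_fderiv_gradient_le
      ((hI.gradient le_rfl).differentiable one_ne_zero) hHess · y) hy hMr
  exact ⟨hmono, fun c lam₁ h₁ lam₂ h₂ e₁ e₂ => hmono.injOn h₁ h₂ (e₁.trans e₂.symm)⟩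

/-- Local uniqueness of the projection parameter: `φ(λ) = I(y + λ∇I(y))` is strictly
monotone increasing on `(−δ²/(ML²), δ²/(ML²))`; in particular, for any `c` there is at most
one `λ` in this interval with `I(y + λ∇I(y)) = c`. -/
theorem projection_step_unique (d : ℕ) (I : EuclideanSpace ℝ (Fin d) → ℝ)
    (hI : ContDiff ℝ 2 I) (M δ L : ℝ) (hδ : 0 < δ) (hL : 0 < L)
    (hHess : ∀ z : EuclideanSpace ℝ (Fin d), ‖fderiv ℝ (fun w => gradient I w) z‖ ≤ M)
    (y : EuclideanSpace ℝ (Fin d))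
    (hylb : δ ≤ ‖gradient I y‖) (hyub : ‖gradient I y‖ ≤ L) :
    StrictMonoOn (fun lam : ℝ => I (y + lam • gradient I y))
      (Set.Ioo (-(δ ^ 2 / (M * L ^ 2))) (δ ^ 2 / (M * L ^ 2))) ∧
    ∀ c : ℝ, ∀ lam₁ ∈ Set.Ioo (-(δ ^ 2 / (M * L ^ 2))) (δ ^ 2 / (M * L ^ 2)),
      ∀ lam₂ ∈ Set.Ioo (-(δ ^ 2 / (M * L ^ 2))) (δ ^ 2 / (M * L ^ 2)),
      I (y + lam₁ • gradient I y) = c → I (y + lam₂ • gradient I y) = c →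
      lam₁ = lam₂ :=
  projection_step_unique_general d I hI M δ L hδ hHess y hylb hyub
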